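/- Let B and A be nonempty finite sets, and define Φ_max(x) = Σ_{b∈B} max_{a∈A} x(b,a) for x : B × A → ℝ. Let O be a nonempty finite set; for each o ∈ O let q(o) : B × A → ℝ be a nonzero vector with 0 ≤ q(o)(b,a) ≤ Q_max for all (b,a), let d : O → ℝ be nonnegative weights with Σ_{o∈O} d(o) = 1, and set H = Σ_{o∈O} d(o)·q(o), assumed nonzero. For each o let ε(o) = 1 − ⟪q(o),H⟫/(‖q(o)‖₂·‖H‖₂) be the cosine distance in ℝ^{B×A}, and let ε̄ = Σ_{o∈O} d(o)·ε(o) be the average cosine distance. Then Σ_{o∈O} d(o)·Φ_max(q(o)) − Φ_max(H) ≤ |B|·√(2|A|) · Q_max · √(ε̄). -/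

import Mathlib

open RealInnerProductSpace

/-- The maximization functional `Φ_max(x) = Σ_{b ∈ B} max_{a ∈ A} x (b, a)`. -/
noncomputable def PhiMax {B A : Type*} [Fintype B] [Fintype A] [Nonempty A]
    (x : B × A → ℝ) : ℝ :=
  ∑ b, Finset.univ.sup' Finset.univ_nonempty fun a => x (b, a)

/-! Put `c o = ⟪q o, H⟫ / ‖H‖²`, so that `c o • H` is the orthogonal projection of `q o` onto `H`.
Since `H` is the `d`-average of the `q o`, the weights `d o * c o` sum to one, and since all entries
are nonnegative, `c o ≥ 0`. As `Φ_max` is subadditive and positively homogeneous,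
`Φ_max (q o) - c o * Φ_max H ≤ Φ_max (q o - c o • H)`, which is at most `√|B|` times the Euclidean
norm of the residual (pick a maximizing action in each row and apply Cauchy–Schwarz). The residual
has squared norm `‖q o‖² (1 - cos²) ≤ 2 ε o ‖q o‖²`, and `‖q o‖ ≤ √(|B| |A|) Q_max`. Averaging over
`o` and applying Jensen's inequality to the concave `√` gives the bound. -/

section PhiMax

variable {B A : Type*} [Fintype B] [Fintype A] [Nonempty A]

lemma phiMax_add_le (x y : B × A → ℝ) : PhiMax (x + y) ≤ PhiMax x + PhiMax y := by
  rw [PhiMax, PhiMax, PhiMax, ← Finset.sum_add_distrib]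
  gcongr with b
  exact Finset.sup'_le _ _ fun a ha =>
    add_le_add (Finset.le_sup' (fun a => x (b, a)) ha) (Finset.le_sup' (fun a => y (b, a)) ha)

lemma phiMax_smul {c : ℝ} (hc : 0 ≤ c) (x : B × A → ℝ) : PhiMax (c • x) = c * PhiMax x := by
  simp only [PhiMax, Pi.smul_apply, smul_eq_mul, mul_comm c, Finset.sum_mul,
    Finset.sup'_mul₀ hc]

lemma phiMax_sub_mul_le {c : ℝ} (hc : 0 ≤ c) (x y : B × A → ℝ) :
    PhiMax x - c * PhiMax y ≤ PhiMax (x - c • y) := by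
  have := phiMax_add_le (x - c • y) (c • y)
  rw [sub_add_cancel, phiMax_smul hc] at this
  linarith

lemma phiMax_le_sqrt_card_mul_norm (z : EuclideanSpace ℝ (B × A)) :
    PhiMax z ≤ √(Fintype.card B) * ‖z‖ := by
  choose sel hsel using fun b : B =>
    Finset.exists_mem_eq_sup' Finset.univ_nonempty fun a => z (b, a)
  have hrow : ∑ b, z (b, sel b) ^ 2 ≤ ‖z‖ ^ 2 := by
    rw [EuclideanSpace.norm_sq_eq, Fintype.sum_prod_type]
    gcongr with b
    simpa using Finset.single_le_sum (f := fun a => z (b, a) ^ 2)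
      (fun a _ => sq_nonneg _) (Finset.mem_univ (sel b))
  calc PhiMax z = ∑ b, z (b, sel b) := Finset.sum_congr rfl fun b _ => (hsel b).2
    _ ≤ √(Fintype.card B * ∑ b, z (b, sel b) ^ 2) :=
      Real.le_sqrt_of_sq_le (by rw [← Finset.card_univ]; exact sq_sum_le_card_mul_sum_sq)
    _ ≤ √(Fintype.card B * ‖z‖ ^ 2) := by gcongr
    _ = √(Fintype.card B) * ‖z‖ := by
      rw [Real.sqrt_mul (Nat.cast_nonneg _), Real.sqrt_sq (norm_nonneg _)]

end PhiMax

lemma EuclideanSpace.norm_sq_le_card_mul_sq {ι : Type*} [Fintype ι] {x : EuclideanSpace ℝ ι}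
    {M : ℝ} (hx : ∀ i, |x i| ≤ M) : ‖x‖ ^ 2 ≤ Fintype.card ι * M ^ 2 := by
  rw [EuclideanSpace.norm_sq_eq]
  calc ∑ i, ‖x i‖ ^ 2 ≤ ∑ _ : ι, M ^ 2 :=
        Finset.sum_le_sum fun i _ => pow_le_pow_left₀ (norm_nonneg _) (hx i) 2
    _ = Fintype.card ι * M ^ 2 := by simp

lemma EuclideanSpace.inner_nonneg {ι : Type*} [Fintype ι] {x y : EuclideanSpace ℝ ι}
    (hx : ∀ i, 0 ≤ x i) (hy : ∀ i, 0 ≤ y i) : 0 ≤ ⟪x, y⟫ := by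
  simp only [PiLp.inner_apply]
  exact Finset.sum_nonneg fun i _ => by simpa using mul_nonneg (hy i) (hx i)

section Projection

variable {F : Type*} [NormedAddCommGroup F] [InnerProductSpace ℝ F]

lemma norm_sub_inner_div_smul_sq_le (x y : F) :
    ‖x - (⟪x, y⟫ / ‖y‖ ^ 2) • y‖ ^ 2 ≤ 2 * (1 - ⟪x, y⟫ / (‖x‖ * ‖y‖)) * ‖x‖ ^ 2 := by
  rcases eq_or_ne y 0 with rfl | hy
  · simp only [inner_zero_right, zero_div, zero_smul, sub_zero]
    nlinarith [sq_nonneg ‖x‖]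
  rcases eq_or_ne x 0 with rfl | hx
  · simp
  have hy' : 0 < ‖y‖ := norm_pos_iff.mpr hy
  have hx' : 0 < ‖x‖ := norm_pos_iff.mpr hx
  rw [norm_sub_sq_real, real_inner_smul_right, norm_smul, mul_pow, Real.norm_eq_abs, sq_abs]
  field_simp
  nlinarith [sq_nonneg (‖x‖ * ‖y‖ - ⟪x, y⟫)]

lemma inner_div_norm_mul_norm_le_one (x y : F) : ⟪x, y⟫ / (‖x‖ * ‖y‖) ≤ 1 :=
  (le_abs_self _).trans (abs_real_inner_div_norm_mul_norm_le_one x y)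

lemma sum_mul_inner_div_norm_sq_eq_one {O : Type*} [Fintype O] {d : O → ℝ} {q : O → F}
    (hH0 : ∑ o, d o • q o ≠ 0) :
    ∑ o, d o * (⟪q o, ∑ o, d o • q o⟫ / ‖∑ o, d o • q o‖ ^ 2) = 1 := by
  simp only [← mul_div_assoc, ← Finset.sum_div, ← real_inner_smul_left, ← sum_inner,
    real_inner_self_eq_norm_sq]
  exact div_self (by positivity)

end Projection

lemma phiMax_sub_inner_div_mul_le {B A : Type*} [Fintype B] [Fintype A] [Nonempty A]
    (x y : EuclideanSpace ℝ (B × A)) (hxy : 0 ≤ ⟪x, y⟫) :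
    PhiMax x - ⟪x, y⟫ / ‖y‖ ^ 2 * PhiMax y
      ≤ √(Fintype.card B) * √(2 * (1 - ⟪x, y⟫ / (‖x‖ * ‖y‖)) * ‖x‖ ^ 2) := by
  set c := ⟪x, y⟫ / ‖y‖ ^ 2
  calc PhiMax x - c * PhiMax y ≤ PhiMax (x - c • y) :=
        phiMax_sub_mul_le (div_nonneg hxy (sq_nonneg _)) x y
    _ ≤ √(Fintype.card B) * ‖x - c • y‖ := phiMax_le_sqrt_card_mul_norm _
    _ ≤ _ := by
      gcongr
      exact Real.le_sqrt_of_sq_le (norm_sub_inner_div_smul_sq_le x y)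

lemma phiMax_sub_inner_div_mul_le_of_abs_le {B A : Type*} [Fintype B] [Fintype A] [Nonempty B]
    [Nonempty A] {x : EuclideanSpace ℝ (B × A)} (y : EuclideanSpace ℝ (B × A))
    (hxy : 0 ≤ ⟪x, y⟫) {M : ℝ} (hx : ∀ i, |x i| ≤ M) :
    PhiMax x - ⟪x, y⟫ / ‖y‖ ^ 2 * PhiMax y
      ≤ Fintype.card B * √(2 * Fintype.card A) * M * √(1 - ⟪x, y⟫ / (‖x‖ * ‖y‖)) := by
  set t := 1 - ⟪x, y⟫ / (‖x‖ * ‖y‖)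
  have ht : 0 ≤ t := sub_nonneg.mpr (inner_div_norm_mul_norm_le_one x y)
  have hM : 0 ≤ M := (abs_nonneg _).trans (hx (Classical.arbitrary _))
  calc PhiMax x - ⟪x, y⟫ / ‖y‖ ^ 2 * PhiMax y
      ≤ √(Fintype.card B) * √(2 * t * ‖x‖ ^ 2) := phiMax_sub_inner_div_mul_le x y hxy
    _ ≤ √(Fintype.card B) * √(2 * t * (Fintype.card (B × A) * M ^ 2)) := by
      gcongr
      exact EuclideanSpace.norm_sq_le_card_mul_sq hx
    _ = Fintype.card B * √(2 * Fintype.card A) * M * √t := by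
      rw [← Real.sqrt_mul (Nat.cast_nonneg _), Fintype.card_prod, Nat.cast_mul,
        show (Fintype.card B : ℝ) * (2 * t * (Fintype.card B * Fintype.card A * M ^ 2))
          = (Fintype.card B * M) ^ 2 * (2 * Fintype.card A) * t by ring,
        Real.sqrt_mul (by positivity), Real.sqrt_mul (by positivity), Real.sqrt_sq (by positivity)]
      ring

lemma Real.sum_mul_sqrt_le_sqrt_sum_mul {ι : Type*} {s : Finset ι} {w f : ι → ℝ}
    (hw : ∀ i ∈ s, 0 ≤ w i) (hw1 : ∑ i ∈ s, w i = 1) (hf : ∀ i ∈ s, 0 ≤ f i) :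
    ∑ i ∈ s, w i * √(f i) ≤ √(∑ i ∈ s, w i * f i) := by
  simpa using Real.strictConcaveOn_sqrt.concaveOn.le_map_sum hw hw1 hf

theorem per_cluster_return_gap_general {B A : Type*} [Fintype B] [Fintype A]
    [Nonempty B] [Nonempty A] {O : Type*} [Fintype O] [Nonempty O] (Qmax : ℝ)
    (q : O → EuclideanSpace ℝ (B × A))
    (hq : ∀ o ba, 0 ≤ q o ba ∧ q o ba ≤ Qmax)
    (d : O → ℝ) (hd : ∀ o, 0 ≤ d o) (hdsum : ∑ o, d o = 1)
    (H : EuclideanSpace ℝ (B × A)) (hH : H = ∑ o, d o • q o) (hH0 : H ≠ 0)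
    (ε : O → ℝ) (hε : ∀ o, ε o = 1 - ⟪q o, H⟫ / (‖q o‖ * ‖H‖))
    (εbar : ℝ) (hεbar : εbar = ∑ o, d o * ε o) :
    (∑ o, d o * PhiMax (q o)) - PhiMax H
      ≤ (Fintype.card B : ℝ) * Real.sqrt (2 * Fintype.card A) * Qmax * Real.sqrt εbar := by
  have hQ : 0 ≤ Qmax := (hq (Classical.arbitrary O) (Classical.arbitrary _)).1.trans (hq _ _).2
  set C := (Fintype.card B : ℝ) * √(2 * Fintype.card A) * Qmax
  set c : O → ℝ := fun o => ⟪q o, H⟫ / ‖H‖ ^ 2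
  have hc : ∑ o, d o * c o = 1 := by
    subst hH
    exact sum_mul_inner_div_norm_sq_eq_one hH0
  have hH_nonneg : ∀ i, 0 ≤ H i := fun i => by
    rw [hH]
    simpa using Finset.sum_nonneg fun o _ => mul_nonneg (hd o) (hq o i).1
  have hgap : ∀ o, PhiMax (q o) - c o * PhiMax H ≤ C * √(ε o) := fun o => by
    rw [hε o]
    exact phiMax_sub_inner_div_mul_le_of_abs_le H
      (EuclideanSpace.inner_nonneg (fun i => (hq o i).1) hH_nonneg)
      fun i => (abs_of_nonneg (hq o i).1).trans_le (hq o i).2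
  have hε_nonneg : ∀ o, 0 ≤ ε o := fun o => by
    rw [hε]
    exact sub_nonneg.mpr (inner_div_norm_mul_norm_le_one _ _)
  calc (∑ o, d o * PhiMax (q o)) - PhiMax H = ∑ o, d o * (PhiMax (q o) - c o * PhiMax H) := by
        simp only [mul_sub, Finset.sum_sub_distrib, ← mul_assoc, ← Finset.sum_mul, hc, one_mul]
    _ ≤ ∑ o, d o * (C * √(ε o)) :=
        Finset.sum_le_sum fun o _ => mul_le_mul_of_nonneg_left (hgap o) (hd o)
    _ = C * ∑ o, d o * √(ε o) := by simp only [Finset.mul_sum, mul_left_comm]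
    _ ≤ C * √εbar := by
        rw [hεbar]
        gcongr
        exact Real.sum_mul_sqrt_le_sqrt_sum_mul (fun o _ => hd o) hdsum fun o _ => hε_nonneg o

theorem per_cluster_return_gap {B A : Type*} [Fintype B] [Fintype A]
    [Nonempty B] [Nonempty A] {O : Type*} [Fintype O] [Nonempty O] (Qmax : ℝ)
    (q : O → EuclideanSpace ℝ (B × A)) (hq0 : ∀ o, q o ≠ 0)
    (hq : ∀ o ba, 0 ≤ q o ba ∧ q o ba ≤ Qmax)
    (d : O → ℝ) (hd : ∀ o, 0 ≤ d o) (hdsum : ∑ o, d o = 1)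
    (H : EuclideanSpace ℝ (B × A)) (hH : H = ∑ o, d o • q o) (hH0 : H ≠ 0)
    (ε : O → ℝ) (hε : ∀ o, ε o = 1 - ⟪q o, H⟫ / (‖q o‖ * ‖H‖))
    (εbar : ℝ) (hεbar : εbar = ∑ o, d o * ε o) :
    (∑ o, d o * PhiMax (q o)) - PhiMax H
      ≤ (Fintype.card B : ℝ) * Real.sqrt (2 * Fintype.card A) * Qmax * Real.sqrt εbar :=
  per_cluster_return_gap_general Qmax q hq d hd hdsum H hH hH0 ε hε εbar hεbar
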